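/- For all integers n ≥ 1 and p ≥ 1 the following identity holds in F: (h_n + y·h_{n−1})·(h̄_p + y⁻¹·h̄_{p−1}) − (h_{n−1} + y·h_{n−2})·(h̄_{p−1} + y⁻¹·h̄_{p−2}) = (x₁x₂x₃)·R/(Π·y)·[(x₂^{−p−1}x₃^{n} − x₂^{n}x₃^{−p−1})/(x₁+y) + (x₃^{−p−1}x₁^{n} − x₃^{n}x₁^{−p−1})/(x₂+y) + (x₁^{−p−1}x₂^{n} − x₁^{n}x₂^{−p−1})/(x₃+y)]. (The left side is ch(Sₙ⊗S_p*) − ch(S_{n−1}⊗S_{p−1}*), the character of the complementary summand Y in the splitting Sₙ⊗S_p* ≅ S_{n−1}⊗S_{p−1}* ⊕ Y obtained from the double Koszul complex; the right side equals the Su–Zhang atypical character of the irreducible gl(3|1)-module V(n,0,−p+1|1).) -/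

import Mathlib

noncomputable section

/-- The field of rational functions over ℚ in four variables. -/
abbrev F : Type := FractionRing (MvPolynomial (Fin 4) ℚ)

def x1 : F := algebraMap (MvPolynomial (Fin 4) ℚ) F (MvPolynomial.X 0)
def x2 : F := algebraMap (MvPolynomial (Fin 4) ℚ) F (MvPolynomial.X 1)
def x3 : F := algebraMap (MvPolynomial (Fin 4) ℚ) F (MvPolynomial.X 2)
def y  : F := algebraMap (MvPolynomial (Fin 4) ℚ) F (MvPolynomial.X 3)

/-- `R = (x₁+y)(x₂+y)(x₃+y)`. -/
def R : F := (x1 + y) * (x2 + y) * (x3 + y)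

/-- `Π = (x₁−x₂)(x₂−x₃)(x₁−x₃)`. -/
def P : F := (x1 - x2) * (x2 - x3) * (x1 - x3)

/-- `a(t,u,v)` : determinant of the 3×3 matrix with `i`-th row `(xᵢ^{t+2}, xᵢ^{u+1}, xᵢ^v)`. -/
def a (t u v : ℤ) : F :=
  Matrix.det !![x1 ^ (t+2), x1 ^ (u+1), x1 ^ v;
                x2 ^ (t+2), x2 ^ (u+1), x2 ^ v;
                x3 ^ (t+2), x3 ^ (u+1), x3 ^ v]

/-- Complete homogeneous symmetric polynomial of degree `k` in three variables
(`0` for `k < 0`). -/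
def hc (u v w : F) (k : ℤ) : F :=
  if k < 0 then 0
  else ∑ i ∈ Finset.range (k.toNat + 1), ∑ j ∈ Finset.range (k.toNat - i + 1),
    u ^ i * v ^ j * w ^ (k.toNat - i - j)

def h (k : ℤ) : F := hc x1 x2 x3 k

def hbar (k : ℤ) : F := hc x1⁻¹ x2⁻¹ x3⁻¹ k

/-- Elementary symmetric polynomials in `x₁, x₂, x₃`. -/
def e : ℕ → F
  | 0 => 1
  | 1 => x1 + x2 + x3
  | 2 => x1*x2 + x1*x3 + x2*x3
  | 3 => x1*x2*x3
  | _ => 0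

/-- Character of the `j`-th super exterior power `Λ_j`. -/
def lamCh (j : ℕ) : F := ∑ r ∈ Finset.range (min 3 j + 1), e r * y ^ (j - r)

/-- Character of the dual `S_j*` of the `j`-th super symmetric power. -/
def sBarCh (j : ℕ) : F := hbar j + y⁻¹ * hbar ((j : ℤ) - 1)

/-- Schur polynomial: `s_μ · Π = det (xᵢ^{μⱼ+3−j})`. -/
def schur (m1 m2 m3 : ℤ) : F := a m1 m2 m3 / P

/-!
By the bialternant formula `h_k · Π = x₁^{k+2}(x₂-x₃) - x₂^{k+2}(x₁-x₃) + x₃^{k+2}(x₁-x₂)`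
(applied at `xᵢ⁻¹` for `h̄_k`, where `Π(x⁻¹) = -Π/(x₁x₂x₃)²`), both super characters become
alternants: `ch Sₙ · Π = Σ ± x_i^{n+1}(x_i+y)(x_j-x_k)` and
`ch S_p* · Π y = Σ ± x_i^{-p}(x_i+y) x_j x_k (x_j-x_k)`. In the difference of the two products
of alternants the diagonal terms cancel, and the terms pairing `i` with `j` carry the factor
`(x_i+y)(x_j+y) = R/(x_k+y)`, which gives the right-hand side.
-/

lemma hc_natCast_mul_vandermonde (u v w : F) (m : ℕ) :
    hc u v w m * ((u - v) * (v - w) * (u - w))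
      = u ^ (m + 2) * (v - w) - v ^ (m + 2) * (u - w) + w ^ (m + 2) * (u - v) := by
  have geom (a b : F) (l : ℕ) :
      (∑ j ∈ Finset.range (l + 1), a ^ j * b ^ (l - j)) * (a - b) = a ^ (l + 1) - b ^ (l + 1) := by
    simpa using geom_sum₂_mul a b (l + 1)
  have hc_mul : hc u v w m * (v - w)
      = v * ∑ i ∈ Finset.range (m + 1), u ^ i * v ^ (m - i)
        - w * ∑ i ∈ Finset.range (m + 1), u ^ i * w ^ (m - i) := by
    rw [hc, if_neg (by omega), Int.toNat_natCast, Finset.sum_mul, Finset.mul_sum,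
      Finset.mul_sum, ← Finset.sum_sub_distrib]
    refine Finset.sum_congr rfl fun i _ => ?_
    simp only [mul_assoc, ← Finset.mul_sum, geom]
    ring
  linear_combination (u - v) * (u - w) * hc_mul + v * (u - w) * geom u v m
    - w * (u - v) * geom u w m

lemma hc_mul_vandermonde (u v w : F) {k : ℤ} (hk : -2 ≤ k) :
    hc u v w k * ((u - v) * (v - w) * (u - w))
      = u ^ (k + 2) * (v - w) - v ^ (k + 2) * (u - w) + w ^ (k + 2) * (u - v) := by
  rcases lt_or_ge k 0 with hk' | hk'
  · rw [hc, if_pos hk', zero_mul]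
    interval_cases k <;> simp only [Int.reduceNeg, Int.reduceAdd, zpow_zero, zpow_one] <;> ring
  · lift k to ℕ using hk'
    exact_mod_cast hc_natCast_mul_vandermonde u v w k

lemma hc_inv_mul_vandermonde {u v w : F} (hu : u ≠ 0) (hv : v ≠ 0) (hw : w ≠ 0) {k : ℤ}
    (hk : -2 ≤ k) :
    hc u⁻¹ v⁻¹ w⁻¹ k * ((u - v) * (v - w) * (u - w))
      = u ^ (-k) * v * w * (v - w) - v ^ (-k) * u * w * (u - w) + w ^ (-k) * u * v * (u - v) := by
  have := hc_mul_vandermonde u⁻¹ v⁻¹ w⁻¹ hk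
  simp only [inv_zpow', neg_add, zpow_add₀ hu, zpow_add₀ hv, zpow_add₀ hw] at this
  field_simp at this ⊢
  linear_combination -this

lemma algebraMap_ne_zero_of_eval_ne_zero {q : MvPolynomial (Fin 4) ℚ} (c : Fin 4 → ℚ)
    (hq : MvPolynomial.eval c q ≠ 0) : algebraMap (MvPolynomial (Fin 4) ℚ) F q ≠ 0 :=
  fun h => hq (by rw [(IsFractionRing.to_map_eq_zero_iff (K := F)).mp h, map_zero])

section

attribute [local simp] Matrix.cons_val_two Matrix.cons_val_three

lemma x1_ne_zero : x1 ≠ 0 := algebraMap_ne_zero_of_eval_ne_zero ![1, 2, 4, 8] (by norm_num)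
lemma x2_ne_zero : x2 ≠ 0 := algebraMap_ne_zero_of_eval_ne_zero ![1, 2, 4, 8] (by norm_num)
lemma x3_ne_zero : x3 ≠ 0 := algebraMap_ne_zero_of_eval_ne_zero ![1, 2, 4, 8] (by norm_num)
lemma y_ne_zero : y ≠ 0 := algebraMap_ne_zero_of_eval_ne_zero ![1, 2, 4, 8] (by norm_num)

lemma x1_add_y_ne_zero : x1 + y ≠ 0 := by
  rw [x1, y, ← map_add]
  exact algebraMap_ne_zero_of_eval_ne_zero ![1, 2, 4, 8] (by norm_num)

lemma x2_add_y_ne_zero : x2 + y ≠ 0 := by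
  rw [x2, y, ← map_add]
  exact algebraMap_ne_zero_of_eval_ne_zero ![1, 2, 4, 8] (by norm_num)

lemma x3_add_y_ne_zero : x3 + y ≠ 0 := by
  rw [x3, y, ← map_add]
  exact algebraMap_ne_zero_of_eval_ne_zero ![1, 2, 4, 8] (by norm_num)

lemma P_ne_zero : P ≠ 0 := by
  rw [P, x1, x2, x3, ← map_sub, ← map_sub, ← map_sub, ← map_mul, ← map_mul]
  exact algebraMap_ne_zero_of_eval_ne_zero ![1, 2, 4, 8] (by norm_num)

end

lemma h_add_y_mul_h_mul_P {n : ℤ} (hn : -1 ≤ n) :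
    (h n + y * h (n - 1)) * P
      = x1 ^ (n + 1) * (x1 + y) * (x2 - x3) - x2 ^ (n + 1) * (x2 + y) * (x1 - x3)
        + x3 ^ (n + 1) * (x3 + y) * (x1 - x2) := by
  have hn₀ := hc_mul_vandermonde x1 x2 x3 (k := n) (by omega)
  have hn₁ := hc_mul_vandermonde x1 x2 x3 (k := n - 1) (by omega)
  rw [show n - 1 + 2 = n + 1 by ring] at hn₁
  rw [show n + 2 = n + 1 + 1 by ring, zpow_add_one₀ x1_ne_zero (n + 1),
    zpow_add_one₀ x2_ne_zero (n + 1), zpow_add_one₀ x3_ne_zero (n + 1)] at hn₀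
  rw [P, h, h]
  linear_combination hn₀ + y * hn₁

lemma hbar_add_y_inv_mul_hbar_mul_P_mul_y {p : ℤ} (hp : -1 ≤ p) :
    (hbar p + y⁻¹ * hbar (p - 1)) * (P * y)
      = x1 ^ (-p) * (x1 + y) * x2 * x3 * (x2 - x3) - x2 ^ (-p) * (x2 + y) * x1 * x3 * (x1 - x3)
        + x3 ^ (-p) * (x3 + y) * x1 * x2 * (x1 - x2) := by
  have hp₀ := hc_inv_mul_vandermonde x1_ne_zero x2_ne_zero x3_ne_zero (k := p) (by omega)
  have hp₁ := hc_inv_mul_vandermonde x1_ne_zero x2_ne_zero x3_ne_zero (k := p - 1) (by omega)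
  simp only [show -(p - 1) = -p + 1 by ring,
    zpow_add_one₀ x1_ne_zero, zpow_add_one₀ x2_ne_zero, zpow_add_one₀ x3_ne_zero] at hp₁
  rw [show (hbar p + y⁻¹ * hbar (p - 1)) * (P * y) = (y * hbar p + hbar (p - 1)) * P by
    field_simp [y_ne_zero], P, hbar, hbar]
  linear_combination y * hp₀ + hp₁

lemma alternant_mul_sub_alternant_mul {K : Type*} [CommRing K] (u v w y A B C U V W : K) :
    (A * u * (u + y) * (v - w) - B * v * (v + y) * (u - w) + C * w * (w + y) * (u - v))
        * (U * (u + y) * v * w * (v - w) - V * (v + y) * u * w * (u - w)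
          + W * (w + y) * u * v * (u - v))
      - (A * (u + y) * (v - w) - B * (v + y) * (u - w) + C * (w + y) * (u - v))
        * (U * u * (u + y) * v * w * (v - w) - V * v * (v + y) * u * w * (u - w)
          + W * w * (w + y) * u * v * (u - v))
    = (u - v) * (v - w) * (u - w) * (u * (v + y) * (w + y) * (w * V * C - v * B * W)
        + v * (w + y) * (u + y) * (u * W * A - w * C * U)
        + w * (u + y) * (v + y) * (v * U * B - u * A * V)) := by
  ring

/-- `ch(Sₙ⊗S_p*) − ch(S_{n−1}⊗S_{p−1}*)`, the character of the complementary summand `Y`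
in the splitting `Sₙ⊗S_p* ≅ S_{n−1}⊗S_{p−1}* ⊕ Y`, equals the Su–Zhang atypical character
of `V(n,0,−p+1|1)`. -/
theorem stmt_9 (n p : ℤ) (hn : 1 ≤ n) (hp : 1 ≤ p) :
    (h n + y * h (n-1)) * (hbar p + y⁻¹ * hbar (p-1))
      - (h (n-1) + y * h (n-2)) * (hbar (p-1) + y⁻¹ * hbar (p-2))
    = (x1*x2*x3) * R / (P * y) *
        ((x2 ^ (-p-1) * x3 ^ n - x2 ^ n * x3 ^ (-p-1)) / (x1 + y)
         + (x3 ^ (-p-1) * x1 ^ n - x3 ^ n * x1 ^ (-p-1)) / (x2 + y)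
         + (x1 ^ (-p-1) * x2 ^ n - x1 ^ n * x2 ^ (-p-1)) / (x3 + y)) := by
  have hSn := h_add_y_mul_h_mul_P (n := n) (by omega)
  have hSn₁ := h_add_y_mul_h_mul_P (n := n - 1) (by omega)
  have hDp := hbar_add_y_inv_mul_hbar_mul_P_mul_y (p := p) (by omega)
  have hDp₁ := hbar_add_y_inv_mul_hbar_mul_P_mul_y (p := p - 1) (by omega)
  rw [show n - 1 + 1 = n by ring, show n - 1 - 1 = n - 2 by ring] at hSn₁
  rw [show p - 1 - 1 = p - 2 by ring, show -(p - 1) = -p + 1 by ring] at hDp₁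
  simp only [zpow_add_one₀ x1_ne_zero, zpow_add_one₀ x2_ne_zero, zpow_add_one₀ x3_ne_zero,
    zpow_sub_one₀ x1_ne_zero, zpow_sub_one₀ x2_ne_zero, zpow_sub_one₀ x3_ne_zero] at hSn hDp₁ ⊢
  have hPy : P ^ 2 * y ≠ 0 := mul_ne_zero (pow_ne_zero 2 P_ne_zero) y_ne_zero
  rw [← mul_left_inj' hPy]
  calc _ = (h n + y * h (n-1)) * P * ((hbar p + y⁻¹ * hbar (p-1)) * (P * y))
        - (h (n-1) + y * h (n-2)) * P * ((hbar (p-1) + y⁻¹ * hbar (p-2)) * (P * y)) := by ring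
    _ = P * (x1 * (x2 + y) * (x3 + y) * (x3 * x2 ^ (-p) * x3 ^ n - x2 * x2 ^ n * x3 ^ (-p))
        + x2 * (x3 + y) * (x1 + y) * (x1 * x3 ^ (-p) * x1 ^ n - x3 * x3 ^ n * x1 ^ (-p))
        + x3 * (x1 + y) * (x2 + y) * (x2 * x1 ^ (-p) * x2 ^ n - x1 * x1 ^ n * x2 ^ (-p))) := by
      rw [hSn, hSn₁, hDp, hDp₁]
      exact alternant_mul_sub_alternant_mul ..
    _ = _ := by
      rw [R]
      field_simp [x1_ne_zero, x2_ne_zero, x3_ne_zero, y_ne_zero, P_ne_zero, x1_add_y_ne_zero,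
        x2_add_y_ne_zero, x3_add_y_ne_zero]
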